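/- arXiv:1606.06078 — 2 statements merged into one kernel-verified Lean document; each statement's English description precedes it below -/
import Mathlib

section
/- Let p be an integer with |p| ≥ 2 and μ a Borel probability measure on 𝕋 invariant under T_p. If μ is an ergodic T_p-invariant measure, then for every Følner sequence {F_n} in ℕ and all k, l ∈ ℤ: lim_{n→∞} (1/|F_n|) Σ_{j ∈ F_n} μ̂(k p^j + l) = μ̂(k) μ̂(l). -/
open MeasureTheory Filter

/-- The circle ℝ/ℤ. -/
abbrev Torus : Type := AddCircle (1 : ℝ)

/-- The times-`q` map `x ↦ qx` on ℝ/ℤ. -/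
noncomputable def timesMap (q : ℤ) : Torus → Torus := fun x => q • x

/-- The `k`-th Fourier coefficient of a measure on ℝ/ℤ. -/
noncomputable def fc (μ : Measure Torus) (k : ℤ) : ℂ :=
  ∫ x : Torus, fourier k x ∂μ

/-- A Følner sequence of finite subsets of ℕ. -/
def IsFolner (F : ℕ → Finset ℕ) : Prop :=
  (∀ n, (F n).Nonempty) ∧ ∀ m : ℕ, Tendsto
    (fun n => ((symmDiff ((F n).image (· + m)) (F n)).card : ℝ) / (F n).card)
    atTop (nhds 0)


/-! Let `U` be the Koopman operator `f ↦ f ∘ T_p` on `L²(μ)` and `e_m` the character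
`x ↦ e^{2πimx}`, so that `μ̂(k p^j + l) = ⟪e_{-l}, U^j e_k⟫`. The von Neumann mean ergodic theorem
holds along any Følner sequence: the averages of `U^j` fix `U`-invariant vectors, on vectors
`U v - v` they telescope to a boundary term of size `|(F_n + 1) Δ F_n| / |F_n|`, and such vectors
are dense in the orthogonal complement of the invariant ones. So the averages converge strongly to
the orthogonal projection onto the invariant vectors, which by ergodicity are the constants; the
projection of `e_k` is `μ̂(k) · 1`, and the limit is `μ̂(k) ⟪e_{-l}, 1⟫ = μ̂(k) μ̂(l)`. -/

open Finset Topology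
open scoped ENNReal

lemma norm_sum_sub_sum_le_card_symmDiff_mul {ι E : Type*} [DecidableEq ι]
    [SeminormedAddCommGroup E] {f : ι → E} {C : ℝ} (hf : ∀ i, ‖f i‖ ≤ C) (s t : Finset ι) :
    ‖∑ i ∈ s, f i - ∑ i ∈ t, f i‖ ≤ #(symmDiff s t) * C := by
  rw [← sum_sdiff_sub_sum_sdiff, symmDiff_def, sup_eq_union,
    card_union_of_disjoint disjoint_sdiff_sdiff, Nat.cast_add, add_mul]
  refine (norm_sub_le _ _).trans (add_le_add ?_ ?_) <;>
  exact (norm_sum_le _ _).trans (by simpa using sum_le_card_nsmul _ _ _ fun i _ ↦ hf i)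

namespace ContinuousLinearMap

section

variable {𝕜 E : Type*} [RCLike 𝕜] [NormedAddCommGroup E] [NormedSpace 𝕜 E]

lemma norm_pow_le_one {U : E →L[𝕜] E} (hU : ‖U‖ ≤ 1) : ∀ j : ℕ, ‖U ^ j‖ ≤ 1
  | 0 => norm_id_le
  | j + 1 => by
    rw [pow_succ]
    exact (norm_mul_le _ _).trans (mul_le_one₀ (norm_pow_le_one hU j) (norm_nonneg _) hU)

variable (U : E →L[𝕜] E)

noncomputable def folnerAverage (s : Finset ℕ) : E →L[𝕜] E :=
  (#s : 𝕜)⁻¹ • ∑ j ∈ s, U ^ j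

lemma folnerAverage_apply (s : Finset ℕ) (x : E) :
    U.folnerAverage s x = (#s : 𝕜)⁻¹ • ∑ j ∈ s, (U ^ j) x := by
  simp [folnerAverage]

variable {U}

lemma norm_folnerAverage_le (hU : ‖U‖ ≤ 1) (s : Finset ℕ) : ‖U.folnerAverage s‖ ≤ 1 := by
  rcases s.eq_empty_or_nonempty with rfl | hs
  · simp [folnerAverage]
  calc ‖U.folnerAverage s‖ ≤ (#s : ℝ)⁻¹ * #s * 1 := by
        rw [folnerAverage, mul_assoc, norm_smul, norm_inv, RCLike.norm_natCast]
        gcongr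
        simpa using norm_sum_le_of_le s fun j _ ↦ norm_pow_le_one hU j
    _ = 1 := by field_simp

lemma folnerAverage_apply_of_isFixedPt {s : Finset ℕ} (hs : s.Nonempty) {x : E} (hx : U x = x) :
    U.folnerAverage s x = x := by
  have : ∀ j : ℕ, (U ^ j) x = x := fun j ↦ by
    induction j with
    | zero => rfl
    | succ j ih => rw [pow_succ, mul_apply_eq_comp, hx, ih]
  rw [folnerAverage_apply, sum_congr rfl fun j _ ↦ this j, sum_const, ← Nat.cast_smul_eq_nsmul 𝕜,
    inv_smul_smul₀ (by exact_mod_cast hs.card_pos.ne')]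

lemma norm_folnerAverage_apply_sub_le (hU : ‖U‖ ≤ 1) (s : Finset ℕ) (v : E) :
    ‖U.folnerAverage s (U v - v)‖ ≤ #(symmDiff (s.image (· + 1)) s) / #s * ‖v‖ := by
  have htel : ∑ j ∈ s, (U ^ j) (U v - v) =
      ∑ j ∈ s.image (· + 1), (U ^ j) v - ∑ j ∈ s, (U ^ j) v := by
    rw [sum_image fun _ _ _ _ h ↦ Nat.add_right_cancel h, ← sum_sub_distrib]
    simp [pow_succ]
  rw [folnerAverage_apply, htel, norm_smul, norm_inv, RCLike.norm_natCast, div_mul_eq_mul_div,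
    inv_mul_eq_div]
  gcongr
  exact norm_sum_sub_sum_le_card_symmDiff_mul
    (fun j ↦ (U ^ j).le_of_opNorm_le (norm_pow_le_one hU j) v |>.trans_eq (one_mul _)) _ _

lemma tendsto_folnerAverage_of_mem_closure_range (hU : ‖U‖ ≤ 1) {F : ℕ → Finset ℕ}
    (hF : IsFolner F) {y : E} (hy : y ∈ closure (LinearMap.range ((U : E →ₗ[𝕜] E) - 1) : Set E)) :
    Tendsto (fun n ↦ U.folnerAverage (F n) y) atTop (𝓝 0) := by
  have hequi : Equicontinuous fun n ↦ ⇑(U.folnerAverage (F n)) :=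
    ((NormedSpace.equicontinuous_TFAE fun n ↦ U.folnerAverage (F n)).out 1 5).2
      (⟨1, fun n ↦ norm_folnerAverage_le hU (F n)⟩ : ∃ C, ∀ n, ‖U.folnerAverage (F n)‖ ≤ C)
  refine closure_minimal ?_ (hequi.isClosed_setOfPred_tendsto continuous_const) hy
  rintro _ ⟨v, rfl⟩
  refine squeeze_zero_norm (fun n ↦ norm_folnerAverage_apply_sub_le hU (F n) v) ?_
  simpa using (hF.2 1).mul_const ‖v‖

end

section

variable {𝕜 E : Type*} [RCLike 𝕜] [NormedAddCommGroup E] [InnerProductSpace 𝕜 E] [CompleteSpace E]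
  {U : E →L[𝕜] E}

lemma orthogonal_eqLocus_one_subset_closure_range (hU : ‖U‖ ≤ 1) :
    ((U.eqLocus (1 : E →L[𝕜] E))ᗮ : Set E) ⊆
      closure (LinearMap.range ((U : E →ₗ[𝕜] E) - 1) : Set E) := by
  rw [← Submodule.topologicalClosure_coe, SetLike.coe_subset_coe,
    ← Submodule.orthogonal_orthogonal_eq_closure]
  refine Submodule.orthogonal_le fun x hx ↦ eq_of_norm_le_re_inner_eq_norm_sq (𝕜 := 𝕜) ?_ ?_
  · simpa using U.le_of_opNorm_le hU x
  · have : ∀ y, inner 𝕜 (U y) x = inner 𝕜 y x := by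
      simpa [Submodule.mem_orthogonal, inner_sub_left, sub_eq_zero] using hx
    simp [this]

theorem tendsto_folnerAverage_starProjection (hU : ‖U‖ ≤ 1) {F : ℕ → Finset ℕ}
    (hF : IsFolner F) (x : E) :
    Tendsto (fun n ↦ U.folnerAverage (F n) x) atTop
      (𝓝 ((U.eqLocus (1 : E →L[𝕜] E)).starProjection x)) := by
  set K := U.eqLocus (1 : E →L[𝕜] E)
  have hfix : U (K.starProjection x) = K.starProjection x := K.starProjection_apply_mem x
  have hrest := tendsto_folnerAverage_of_mem_closure_range hU hF <|
    orthogonal_eqLocus_one_subset_closure_range hU (K.sub_starProjection_mem_orthogonal x)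
  have hsplit : ∀ n, U.folnerAverage (F n) x =
      K.starProjection x + U.folnerAverage (F n) (x - K.starProjection x) := fun n ↦ by
    rw [map_sub, folnerAverage_apply_of_isFixedPt (hF.1 n) hfix, add_sub_cancel]
  simpa only [add_zero, ← hsplit] using (tendsto_const_nhds (x := K.starProjection x)).add hrest

end

end ContinuousLinearMap

section Koopman

variable {α : Type*} [MeasurableSpace α] {μ : Measure α} {T : α → α} {𝕜 : Type*} [RCLike 𝕜]
  {p : ℝ≥0∞} [Fact (1 ≤ p)]

variable (𝕜 p) in
noncomputable def koopman (hT : MeasurePreserving T μ μ) : Lp 𝕜 p μ →L[𝕜] Lp 𝕜 p μ :=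
  (Lp.compMeasurePreservingₗᵢ 𝕜 T hT).toContinuousLinearMap

lemma norm_koopman_le (hT : MeasurePreserving T μ μ) : ‖koopman 𝕜 p hT‖ ≤ 1 :=
  LinearIsometry.norm_toContinuousLinearMap_le _

lemma koopman_const [IsFiniteMeasure μ] (hT : MeasurePreserving T μ μ) (c : 𝕜) :
    koopman 𝕜 p hT (Lp.const p μ c) = Lp.const p μ c :=
  rfl

lemma Ergodic.eqLocus_koopman_eq_span [IsFiniteMeasure μ] (h : Ergodic T μ) :
    (koopman 𝕜 p h.toMeasurePreserving).eqLocus (1 : Lp 𝕜 p μ →L[𝕜] Lp 𝕜 p μ) =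
      𝕜 ∙ Lp.const p μ (1 : 𝕜) := by
  ext u
  rw [LinearMap.mem_eqLocus, Submodule.mem_span_singleton]
  constructor
  · intro hu
    obtain ⟨c, hc⟩ := h.eq_const_of_compMeasurePreserving_eq (congrArg Subtype.val hu)
    refine ⟨c, ?_⟩
    have hconst : c • Lp.const p μ (1 : 𝕜) = Lp.const p μ c := by
      have := (Lp.constₗ p μ 𝕜).map_smul c (1 : 𝕜)
      rwa [Lp.constₗ_apply, Lp.constₗ_apply, smul_eq_mul, mul_one, eq_comm] at this
    exact hconst.trans (Subtype.ext hc.symm)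
  · rintro ⟨c, rfl⟩
    simp [koopman_const]

lemma Ergodic.starProjection_eqLocus_koopman [IsProbabilityMeasure μ] (h : Ergodic T μ)
    (f : Lp 𝕜 2 μ) :
    ((koopman 𝕜 2 h.toMeasurePreserving).eqLocus
        (1 : Lp 𝕜 2 μ →L[𝕜] Lp 𝕜 2 μ)).starProjection f =
      inner 𝕜 (Lp.const 2 μ (1 : 𝕜)) f • Lp.const 2 μ (1 : 𝕜) := by
  simp only [h.eqLocus_koopman_eq_span]
  rw [Submodule.starProjection_singleton, Lp.norm_const _ _ _ two_ne_zero]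
  simp

end Koopman

section Fourier

variable (μ : Measure Torus) [IsFiniteMeasure μ]

noncomputable def fourierL2 (m : ℤ) : Lp ℂ 2 μ :=
  ContinuousMap.toLp 2 μ ℂ (fourier m)

lemma inner_fourierL2 (a b : ℤ) : inner ℂ (fourierL2 μ a) (fourierL2 μ b) = fc μ (b - a) := by
  rw [fourierL2, fourierL2, ContinuousMap.inner_toLp, fc]
  congr 1 with x
  rw [← fourier_neg, ← fourier_add, ← sub_eq_add_neg]

lemma fourierL2_zero : fourierL2 μ 0 = Lp.const 2 μ 1 := by
  refine Lp.ext ((ContinuousMap.coeFn_toLp μ _).trans ?_ |>.trans (Lp.coeFn_const 2 μ 1).symm)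
  exact Eventually.of_forall fun x ↦ fourier_zero

lemma koopman_timesMap_fourierL2 {q : ℤ} (hT : MeasurePreserving (timesMap q) μ μ) (m : ℤ) :
    koopman ℂ 2 hT (fourierL2 μ m) = fourierL2 μ (m * q) := by
  refine Lp.ext <| (Lp.coeFn_compMeasurePreserving _ hT).trans <|
    (hT.quasiMeasurePreserving.ae_eq_comp (ContinuousMap.coeFn_toLp μ _)).trans <|
      .trans (Eventually.of_forall fun x ↦ ?_) (ContinuousMap.coeFn_toLp μ _).symm
  simp only [Function.comp_apply, timesMap, fourier_apply, smul_smul]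

lemma koopman_timesMap_pow_fourierL2 {q : ℤ} (hT : MeasurePreserving (timesMap q) μ μ)
    (m : ℤ) (j : ℕ) : (koopman ℂ 2 hT ^ j) (fourierL2 μ m) = fourierL2 μ (m * q ^ j) := by
  induction j generalizing m with
  | zero => simp
  | succ j ih =>
    rw [pow_succ, mul_apply_eq_comp, koopman_timesMap_fourierL2, ih, mul_assoc, ← pow_succ']

end Fourier

theorem stmt9_general (p : ℤ) (μ : Measure Torus) [IsProbabilityMeasure μ]
    (herg : Ergodic (timesMap p) μ) (F : ℕ → Finset ℕ) (hF : IsFolner F) (k l : ℤ) :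
    Tendsto (fun n => (1 / ((F n).card : ℂ)) * ∑ j ∈ F n, fc μ (k * p ^ j + l))
      atTop (nhds (fc μ k * fc μ l)) := by
  have hU := norm_koopman_le (𝕜 := ℂ) (p := 2) herg.toMeasurePreserving
  have hlim := (tendsto_const_nhds (x := fourierL2 μ (-l))).inner (𝕜 := ℂ)
    (ContinuousLinearMap.tendsto_folnerAverage_starProjection hU hF (fourierL2 μ k))
  rw [herg.starProjection_eqLocus_koopman, ← fourierL2_zero, inner_smul_right, inner_fourierL2,
    inner_fourierL2] at hlim
  convert hlim using 2 with n
  · rw [ContinuousLinearMap.folnerAverage_apply, inner_smul_right, inner_sum, one_div]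
    simp only [koopman_timesMap_pow_fourierL2, inner_fourierL2, sub_neg_eq_add]
  · rw [sub_zero, zero_sub, neg_neg]

theorem stmt9 (p : ℤ) (hp : 2 ≤ |p|) (μ : Measure Torus) [IsProbabilityMeasure μ]
    (herg : Ergodic (timesMap p) μ) (F : ℕ → Finset ℕ) (hF : IsFolner F) (k l : ℤ) :
    Tendsto (fun n => (1 / ((F n).card : ℂ)) * ∑ j ∈ F n, fc μ (k * p ^ j + l))
      atTop (nhds (fc μ k * fc μ l)) :=
  stmt9_general p μ herg F hF k l
end

section
/- Let p be an integer with |p| ≥ 2. A Borel probability measure μ on 𝕋 is a strongly mixing T_p-invariant measure if and only if lim_{j→∞} μ̂(k p^j + l) = μ̂(k) μ̂(l) for all k, l ∈ ℤ. -/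
open MeasureTheory Filter

open Topology Submodule

/-!
The Koopman operators `U^j F = F ∘ T_p^j` are isometries of `L²(μ)`, so the forms
`(F, G) ↦ ⟪U^j F, G⟫` are uniformly bounded, and the convergence `⟪U^j F, G⟫ → ⟪F, 1⟫⟪1, G⟫`
passes from pairs taken in sets with dense linear span to all pairs. Mixing is this convergence
for indicator functions, and the Fourier condition is this convergence for the characters `e_k`,
because `⟪U^j e_k, e_l⟫ = μ̂(l - k p^j)`; both families span dense subspaces of `L²(μ)`.
Invariance of `μ` comes from the Fourier condition with `l = 0`: `μ̂(k p^(j+1))` and `μ̂(k p^j)`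
have the same limit, so `μ̂(k p) = μ̂(k)`, and a measure on `𝕋` is determined by its Fourier
coefficients.
-/

section
variable {𝕜 𝕜₂ E F ι : Type*} [NontriviallyNormedField 𝕜] [NontriviallyNormedField 𝕜₂]
  {σ : 𝕜 →+* 𝕜₂} [RingHomIsometric σ] [SeminormedAddCommGroup E] [NormedSpace 𝕜 E]
  [NormedAddCommGroup F] [NormedSpace 𝕜₂ F]

theorem ContinuousLinearMap.tendsto_of_tendsto_of_dense_span {l : Filter ι}
    {T : ι → E →SL[σ] F} {S : E →SL[σ] F} {C : ℝ} (hT : ∀ i x, ‖T i x‖ ≤ C * ‖x‖)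
    {s : Set E} (hs : Dense (span 𝕜 s : Set E))
    (h : ∀ x ∈ s, Tendsto (fun i ↦ T i x) l (𝓝 (S x))) (x : E) :
    Tendsto (fun i ↦ T i x) l (𝓝 (S x)) := by
  let V : Submodule 𝕜 E :=
    { carrier := {x | Tendsto (fun i ↦ T i x) l (𝓝 (S x))}
      add_mem' := fun {x y} hx hy ↦ by simpa only [Set.mem_ofPred_eq, map_add] using hx.add hy
      zero_mem' := by simpa only [Set.mem_ofPred_eq, map_zero] using tendsto_const_nhds
      smul_mem' := fun c x hx ↦ by
        simpa only [Set.mem_ofPred_eq, map_smulₛₗ] using hx.const_smul (σ c) }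
  have hequi : Equicontinuous fun i ↦ (T i : E → F) :=
    ((NormedSpace.equicontinuous_TFAE T).out 3 1).1 (⟨C, hT⟩ : ∃ C, ∀ i x, ‖T i x‖ ≤ C * ‖x‖)
  have hV : IsClosed (V : Set E) := hequi.isClosed_setOfPred_tendsto S.continuous
  have hsV : span 𝕜 s ≤ V := span_le.2 h
  exact hV.closure_subset_iff.2 hsV (hs.closure_eq ▸ Set.mem_univ x)
end

namespace MeasureTheory
variable {α 𝕜 : Type*} [MeasurableSpace α] {μ : Measure α} [RCLike 𝕜] {p : ENNReal}

theorem indicatorConstLp_eq_smul_one {s : Set α} (hs : MeasurableSet s) (hμs : μ s ≠ ⊤)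
    (c : 𝕜) :
    indicatorConstLp p hs hμs c = c • indicatorConstLp p hs hμs (1 : 𝕜) := by
  refine Lp.ext ?_
  filter_upwards [indicatorConstLp_coeFn (p := p) (hs := hs) (hμs := hμs) (c := c),
    indicatorConstLp_coeFn (p := p) (hs := hs) (hμs := hμs) (c := (1 : 𝕜)),
    Lp.coeFn_smul c (indicatorConstLp p hs hμs (1 : 𝕜))] with x hc h1 hsmul
  rw [hc, hsmul, Pi.smul_apply, h1]
  by_cases hx : x ∈ s <;> simp [hx]

namespace Lp

variable [Fact (1 ≤ p)]

theorem dense_span_indicatorConstLp_one (hp : p ≠ ⊤) :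
    Dense (span 𝕜 {f | ∃ (s : Set α) (hs : MeasurableSet s) (hμs : μ s ≠ ⊤),
      f = indicatorConstLp p hs hμs (1 : 𝕜)} : Set (Lp 𝕜 p μ)) := by
  set V := span 𝕜 {f | ∃ (s : Set α) (hs : MeasurableSet s) (hμs : μ s ≠ ⊤),
      f = indicatorConstLp p hs hμs (1 : 𝕜)}
  refine fun f ↦ ?_
  rw [← Submodule.topologicalClosure_coe]
  induction f using Lp.induction hp with
  | indicatorConst c hs hμs =>
    refine V.le_topologicalClosure ?_
    rw [Lp.simpleFunc.coe_indicatorConst, indicatorConstLp_eq_smul_one]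
    exact V.smul_mem c (subset_span ⟨_, hs, hμs.ne, rfl⟩)
  | add _ _ _ hf hg => exact V.topologicalClosure.add_mem hf hg
  | isClosed => exact V.isClosed_topologicalClosure
end Lp

end MeasureTheory

theorem MeasureTheory.ext_of_integral_eq_of_dense_span {X : Type*} [TopologicalSpace X]
    [CompactSpace X] [MeasurableSpace X] [BorelSpace X] [HasOuterApproxClosed X]
    {μ ν : Measure X} [IsFiniteMeasure μ] [IsFiniteMeasure ν] {s : Set C(X, ℂ)}
    (hs : Dense (span ℂ s : Set C(X, ℂ))) (h : ∀ f ∈ s, ∫ x, f x ∂μ = ∫ x, f x ∂ν) : μ = ν := by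
  have hI (ρ : Measure X) [IsFiniteMeasure ρ] (f : C(X, ℂ)) :
      (L1.integralCLM' ℂ).comp (ContinuousMap.toLp 1 ρ ℂ) f = ∫ x, f x ∂ρ := by
    rw [ContinuousLinearMap.comp_apply, ← L1.integral_eq', L1.integral_eq_integral]
    exact integral_congr_ae (ContinuousMap.coeFn_toLp ρ f)
  have hC (f : C(X, ℂ)) : ∫ x, f x ∂μ = ∫ x, f x ∂ν := by
    have hext : (L1.integralCLM' ℂ).comp (ContinuousMap.toLp 1 μ ℂ) =
        (L1.integralCLM' ℂ).comp (ContinuousMap.toLp 1 ν ℂ) :=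
      ContinuousLinearMap.ext_on hs fun f hf ↦ by rw [hI, hI]; exact h f hf
    rw [← hI μ, ← hI ν, hext]
  refine ext_of_forall_integral_eq_of_IsFiniteMeasure fun f ↦ ?_
  have hf := hC ((ContinuousMap.mk ((↑) : ℝ → ℂ) Complex.continuous_ofReal).comp f.toContinuousMap)
  simp only [ContinuousMap.comp_apply, ContinuousMap.coe_mk] at hf
  rw [integral_complex_ofReal, integral_complex_ofReal] at hf
  exact_mod_cast hf

theorem AddCircle.dense_span_fourier_toLp {T : ℝ} [Fact (0 < T)] {p : ENNReal} [Fact (1 ≤ p)]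
    (hp : p ≠ ⊤) (μ : Measure (AddCircle T)) [IsFiniteMeasure μ] :
    Dense (span ℂ (Set.range fun n ↦ ContinuousMap.toLp p μ ℂ (fourier n)) : Set (Lp ℂ p μ)) := by
  rw [Submodule.dense_iff_topologicalClosure_eq_top]
  convert! (ContinuousMap.toLp_denseRange ℂ μ ℂ hp).topologicalClosure_map_submodule
    span_fourier_closure_eq_top
  rw [map_span, ← Set.range_comp]
  rfl

section Koopman

variable {α : Type*} [MeasurableSpace α] {μ : Measure α} {T : α → α}

def IsMixing (T : α → α) (μ : Measure α) : Prop :=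
  ∀ A B : Set α, MeasurableSet A → MeasurableSet B →
    Tendsto (fun j ↦ μ (T^[j] ⁻¹' A ∩ B)) atTop (𝓝 (μ A * μ B))

namespace MeasureTheory.MeasurePreserving

noncomputable def koopman (hT : MeasurePreserving T μ μ) (j : ℕ) : Lp ℂ 2 μ →L[ℂ] Lp ℂ 2 μ :=
  (Lp.compMeasurePreservingₗᵢ ℂ T^[j] (hT.iterate j)).toContinuousLinearMap

variable [IsFiniteMeasure μ] (hT : MeasurePreserving T μ μ)

def IsMixingPair (F G : Lp ℂ 2 μ) : Prop :=
  Tendsto (fun j ↦ inner ℂ (hT.koopman j F) G) atTop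
    (𝓝 (inner ℂ F (Lp.const 2 μ 1) * inner ℂ (Lp.const 2 μ 1) G))

theorem isMixingPair_of_dense_span {s t : Set (Lp ℂ 2 μ)}
    (hs : Dense (span ℂ s : Set (Lp ℂ 2 μ))) (ht : Dense (span ℂ t : Set (Lp ℂ 2 μ)))
    (h : ∀ F ∈ s, ∀ G ∈ t, hT.IsMixingPair F G) (F G : Lp ℂ 2 μ) : hT.IsMixingPair F G := by
  set one : Lp ℂ 2 μ := Lp.const 2 μ 1
  have hnorm (j : ℕ) (F : Lp ℂ 2 μ) : ‖hT.koopman j F‖ = ‖F‖ :=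
    Lp.norm_compMeasurePreserving F (hT.iterate j)
  have hleft (F : Lp ℂ 2 μ) (hF : F ∈ s) (G : Lp ℂ 2 μ) : hT.IsMixingPair F G := by
    refine ContinuousLinearMap.tendsto_of_tendsto_of_dense_span
      (T := fun j ↦ innerSL ℂ (hT.koopman j F)) (S := inner ℂ F one • innerSL ℂ one)
      (C := ‖F‖) (fun j G ↦ ?_) ht (h F hF) G
    simpa [hnorm] using norm_inner_le_norm (𝕜 := ℂ) (hT.koopman j F) G
  have key := ContinuousLinearMap.tendsto_of_tendsto_of_dense_span (l := atTop)
      (T := fun j ↦ (innerSLFlip ℂ G).comp (hT.koopman j))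
      (S := inner ℂ one G • innerSLFlip ℂ one)
      (C := ‖G‖) (fun j F ↦ ?_) hs (fun F hF ↦ ?_) F
  · simpa [IsMixingPair, mul_comm] using key
  · simpa [hnorm, mul_comm] using norm_inner_le_norm (𝕜 := ℂ) (hT.koopman j F) G
  · simpa [IsMixingPair, mul_comm] using hleft F hF G

theorem inner_koopman_indicatorConstLp {A B : Set α} (hA : MeasurableSet A)
    (hB : MeasurableSet B) (j : ℕ) :
    inner ℂ (hT.koopman j (indicatorConstLp 2 hA (measure_ne_top μ A) 1))
        (indicatorConstLp 2 hB (measure_ne_top μ B) 1) =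
      μ.real (T^[j] ⁻¹' A ∩ B) :=
  L2.inner_indicatorConstLp_one_indicatorConstLp_one (hA.preimage (hT.iterate j).measurable) hB

theorem isMixingPair_indicatorConstLp_iff {A B : Set α} (hA : MeasurableSet A)
    (hB : MeasurableSet B) :
    hT.IsMixingPair (indicatorConstLp 2 hA (measure_ne_top μ A) 1)
        (indicatorConstLp 2 hB (measure_ne_top μ B) 1) ↔
      Tendsto (fun j ↦ μ (T^[j] ⁻¹' A ∩ B)) atTop (𝓝 (μ A * μ B)) := by
  have hone : Lp.const 2 μ (1 : ℂ) =
      indicatorConstLp 2 MeasurableSet.univ (measure_ne_top μ _) 1 :=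
    (indicatorConstLp_univ ..).symm
  rw [IsMixingPair, hone, L2.inner_indicatorConstLp_one_indicatorConstLp_one,
    L2.inner_indicatorConstLp_one_indicatorConstLp_one, Set.inter_univ, Set.univ_inter]
  simp_rw [inner_koopman_indicatorConstLp]
  rw [← ENNReal.tendsto_toReal_iff (fun _ ↦ measure_ne_top μ _) (by finiteness),
    Complex.isometry_ofReal.isEmbedding.tendsto_nhds_iff]
  simp [Function.comp_def, Measure.real]

theorem isMixing_iff_forall_isMixingPair : IsMixing T μ ↔ ∀ F G, hT.IsMixingPair F G := by
  refine ⟨fun hmix ↦ ?_, fun h A B hA hB ↦ (hT.isMixingPair_indicatorConstLp_iff hA hB).1 (h _ _)⟩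
  have hdense :=
    Lp.dense_span_indicatorConstLp_one (𝕜 := ℂ) (μ := μ) (p := 2) ENNReal.ofNat_ne_top
  refine hT.isMixingPair_of_dense_span hdense hdense ?_
  rintro _ ⟨A, hA, -, rfl⟩ _ ⟨B, hB, -, rfl⟩
  exact (hT.isMixingPair_indicatorConstLp_iff hA hB).2 (hmix A B hA hB)

end MeasureTheory.MeasurePreserving

end Koopman

section Torus

theorem timesMap_iterate (q : ℤ) (j : ℕ) : (timesMap q)^[j] = timesMap (q ^ j) := by
  induction j with
  | zero => funext x; simp [timesMap]
  | succ j ih =>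
    funext x
    rw [Function.iterate_succ_apply', ih]
    simp only [timesMap, smul_smul, pow_succ']

theorem fourier_timesMap (k q : ℤ) (x : Torus) :
    fourier k (timesMap q x) = fourier (k * q) x := by
  rw [timesMap, fourier_apply, fourier_apply, smul_smul]

theorem continuous_timesMap (q : ℤ) : Continuous (timesMap q) := continuous_zsmul q

variable {μ : Measure Torus}

theorem fc_map_timesMap (q k : ℤ) : fc (μ.map (timesMap q)) k = fc μ (k * q) := by
  rw [fc, integral_map (continuous_timesMap q).aemeasurable
    (fourier k).continuous.aestronglyMeasurable]
  simp only [fourier_timesMap, fc]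

theorem fc_zero [IsProbabilityMeasure μ] : fc μ 0 = 1 := by simp [fc]

theorem fc_mul_eq_of_tendsto {q : ℤ}
    (H : ∀ k, Tendsto (fun j ↦ fc μ (k * q ^ j)) atTop (𝓝 (fc μ k))) (k : ℤ) :
    fc μ (k * q) = fc μ k := by
  have hshift : Tendsto (fun j ↦ fc μ (k * q * q ^ j)) atTop (𝓝 (fc μ k)) := by
    simpa only [pow_succ', mul_assoc] using (tendsto_add_atTop_iff_nat 1).2 (H k)
  exact tendsto_nhds_unique (H (k * q)) hshift

variable [IsFiniteMeasure μ]

theorem ext_of_fc {ν : Measure Torus} [IsFiniteMeasure ν]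
    (h : ∀ k, fc μ k = fc ν k) : μ = ν :=
  MeasureTheory.ext_of_integral_eq_of_dense_span
    (Submodule.dense_iff_topologicalClosure_eq_top.2 span_fourier_closure_eq_top)
    (by rintro _ ⟨k, rfl⟩; exact h k)

theorem measurePreserving_timesMap_iff (q : ℤ) :
    MeasurePreserving (timesMap q) μ μ ↔ ∀ k, fc μ (k * q) = fc μ k := by
  refine ⟨fun h k ↦ by rw [← fc_map_timesMap, h.map_eq], fun h ↦ ?_⟩
  exact ⟨(continuous_timesMap q).measurable, ext_of_fc fun k ↦ by rw [fc_map_timesMap, h]⟩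

theorem inner_toLp_fourier (k l : ℤ) :
    inner ℂ (ContinuousMap.toLp 2 μ ℂ (fourier k)) (ContinuousMap.toLp 2 μ ℂ (fourier l)) =
      fc μ (l - k) := by
  rw [L2.inner_def, fc]
  refine integral_congr_ae ?_
  filter_upwards [ContinuousMap.coeFn_toLp (p := 2) (𝕜 := ℂ) μ (fourier k),
    ContinuousMap.coeFn_toLp (p := 2) (𝕜 := ℂ) μ (fourier l)] with x hk hl
  rw [hk, hl, RCLike.inner_apply, ← fourier_neg, ← fourier_add, sub_eq_add_neg, add_comm]

theorem const_one_eq_toLp_fourier_zero :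
    Lp.const 2 μ (1 : ℂ) = ContinuousMap.toLp 2 μ ℂ (fourier 0) := by
  refine Lp.ext ?_
  filter_upwards [Lp.coeFn_const 2 μ (1 : ℂ),
    ContinuousMap.coeFn_toLp (p := 2) (𝕜 := ℂ) μ (fourier 0)] with x h1 h0
  rw [h1, h0, fourier_zero]
  rfl

theorem koopman_toLp_fourier {q : ℤ} (hT : MeasurePreserving (timesMap q) μ μ) (j : ℕ) (k : ℤ) :
    hT.koopman j (ContinuousMap.toLp 2 μ ℂ (fourier k)) =
      ContinuousMap.toLp 2 μ ℂ (fourier (k * q ^ j)) := by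
  refine Lp.ext ?_
  set ek := ContinuousMap.toLp 2 μ ℂ (fourier k)
  have hk : ek =ᵐ[μ] fourier k := ContinuousMap.coeFn_toLp μ (fourier k)
  filter_upwards [Lp.coeFn_compMeasurePreserving ek (hT.iterate j),
    (hT.iterate j).quasiMeasurePreserving.ae_eq_comp hk,
    ContinuousMap.coeFn_toLp (p := 2) (𝕜 := ℂ) μ (fourier (k * q ^ j))] with x hcomp hkT hkq
  rw [hkq, ← fourier_timesMap, ← timesMap_iterate]
  exact hcomp.trans hkT

theorem isMixingPair_toLp_fourier_iff {q : ℤ} (hT : MeasurePreserving (timesMap q) μ μ)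
    (k l : ℤ) :
    hT.IsMixingPair (ContinuousMap.toLp 2 μ ℂ (fourier k))
        (ContinuousMap.toLp 2 μ ℂ (fourier l)) ↔
      Tendsto (fun j ↦ fc μ (l - k * q ^ j)) atTop (𝓝 (fc μ (-k) * fc μ l)) := by
  simp only [MeasurePreserving.IsMixingPair, koopman_toLp_fourier, const_one_eq_toLp_fourier_zero,
    inner_toLp_fourier, sub_zero, zero_sub]

end Torus

theorem stmt12_general (p : ℤ) (μ : Measure Torus) [IsProbabilityMeasure μ] :
    (MeasurePreserving (timesMap p) μ μ ∧
        ∀ A B : Set Torus, MeasurableSet A → MeasurableSet B →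
          Tendsto (fun j => μ ((timesMap p)^[j] ⁻¹' A ∩ B)) atTop (nhds (μ A * μ B))) ↔
      ∀ k l : ℤ, Tendsto (fun j => fc μ (k * p ^ j + l)) atTop (nhds (fc μ k * fc μ l)) := by
  constructor
  · rintro ⟨hT, hmix⟩ k l
    have := hT.isMixing_iff_forall_isMixingPair.1 hmix
      (ContinuousMap.toLp 2 μ ℂ (fourier (-k))) (ContinuousMap.toLp 2 μ ℂ (fourier l))
    simpa [add_comm] using (isMixingPair_toLp_fourier_iff hT (-k) l).1 this
  · intro H
    have hT : MeasurePreserving (timesMap p) μ μ :=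
      (measurePreserving_timesMap_iff p).2 <|
        fc_mul_eq_of_tendsto fun k ↦ by simpa [fc_zero] using H k 0
    have hdense := AddCircle.dense_span_fourier_toLp (p := 2) ENNReal.ofNat_ne_top μ
    refine ⟨hT, hT.isMixing_iff_forall_isMixingPair.2
      (hT.isMixingPair_of_dense_span hdense hdense ?_)⟩
    rintro _ ⟨k, rfl⟩ _ ⟨l, rfl⟩
    exact (isMixingPair_toLp_fourier_iff hT k l).2 (by simpa [neg_add_eq_sub] using H (-k) l)

theorem stmt12 (p : ℤ) (hp : 2 ≤ |p|) (μ : Measure Torus) [IsProbabilityMeasure μ] :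
    (MeasurePreserving (timesMap p) μ μ ∧
        ∀ A B : Set Torus, MeasurableSet A → MeasurableSet B →
          Tendsto (fun j => μ ((timesMap p)^[j] ⁻¹' A ∩ B)) atTop (nhds (μ A * μ B))) ↔
      ∀ k l : ℤ, Tendsto (fun j => fc μ (k * p ^ j + l)) atTop (nhds (fc μ k * fc μ l)) :=
  stmt12_general p μ
end
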